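/- Fix ξ ∈ (0, π]. As s → ∞, the smaller eigenvalue Λ_ph^s(ξ) of S^s(ξ) = M(ξ)⁻¹ R^s(ξ) converges to 6(1 − cos ξ)/(2 + cos ξ), the square of the dispersion relation of the P1 classical (continuous) finite element semi-discretization. -/

import Mathlib

/-! Since det M(ξ) = 1/12, the eigenvalues of S^s(ξ) = M(ξ)⁻¹ R^s(ξ) are the roots of
det (R^s(ξ) − Λ M(ξ)) = Λ²/12 − B Λ + C, where B = `Bcoef s ξ` and C = `Ccoef s ξ` are affine in s.
The smaller root 6B − 6√(B² − C/3) equals 2C / (B + √(B² − C/3)); after dividing numerator and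
denominator by s it tends to 2·4 sin²(ξ/2) / (2·(2 + cos ξ)/3) = 6(1 − cos ξ)/(2 + cos ξ). -/

open Real Complex Matrix Filter Topology

/-- Fourier symbol of the SIPG mass matrix (mesh size h = 1). -/
noncomputable def Msym (ξ : ℝ) : Matrix (Fin 2) (Fin 2) ℂ :=
  !![(((2 + Real.cos ξ) / 3 : ℝ) : ℂ), Complex.I * (Real.sin ξ : ℂ) / 6;
     -Complex.I * (Real.sin ξ : ℂ) / 6, (((2 - Real.cos ξ) / 12 : ℝ) : ℂ)]

/-- Fourier symbol of the SIPG stiffness matrix with penalty parameter s (mesh size h = 1). -/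
noncomputable def Rsym (s ξ : ℝ) : Matrix (Fin 2) (Fin 2) ℂ :=
  !![((4 * Real.sin (ξ / 2) ^ 2 : ℝ) : ℂ), 0;
     0, ((s - Real.cos (ξ / 2) ^ 2 : ℝ) : ℂ)]

/-- The matrix S(ξ) = M(ξ)⁻¹ R^s(ξ). -/
noncomputable def Ssym (s ξ : ℝ) : Matrix (Fin 2) (Fin 2) ℂ := (Msym ξ)⁻¹ * Rsym s ξ

/-- Λ is an eigenvalue of the 2×2 complex matrix S. -/
def IsEigOf (S : Matrix (Fin 2) (Fin 2) ℂ) (Λ : ℂ) : Prop :=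
  ∃ v : Fin 2 → ℂ, v ≠ 0 ∧ S.mulVec v = Λ • v

/-- The coefficient B(ξ) of the characteristic quadratic Λ²/12 − B Λ + C = 0. -/
noncomputable def Bcoef (s ξ : ℝ) : ℝ :=
  4 * Real.sin (ξ / 2) ^ 2 * (2 - Real.cos ξ) / 12 +
    (s - Real.cos (ξ / 2) ^ 2) * (2 + Real.cos ξ) / 3

/-- The coefficient C(ξ) of the characteristic quadratic Λ²/12 − B Λ + C = 0. -/
noncomputable def Ccoef (s ξ : ℝ) : ℝ :=
  4 * Real.sin (ξ / 2) ^ 2 * (s - Real.cos (ξ / 2) ^ 2)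

lemma isEigOf_iff_det_sub_smul_eq_zero (A : Matrix (Fin 2) (Fin 2) ℂ) (μ : ℂ) :
    IsEigOf A μ ↔ (A - μ • 1).det = 0 := by
  simp only [IsEigOf, ← Matrix.exists_mulVec_eq_zero_iff, Matrix.sub_mulVec, Matrix.smul_mulVec,
    Matrix.one_mulVec, sub_eq_zero]

lemma isEigOf_inv_mul_iff {M R : Matrix (Fin 2) (Fin 2) ℂ} (hM : IsUnit M.det) (μ : ℂ) :
    IsEigOf (M⁻¹ * R) μ ↔ (R - μ • M).det = 0 := by
  rw [isEigOf_iff_det_sub_smul_eq_zero, ← Matrix.nonsing_inv_mul _ hM, ← Matrix.mul_smul,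
    ← Matrix.mul_sub, Matrix.det_mul,
    mul_eq_zero_iff_left (Matrix.isUnit_nonsing_inv_det _ hM).ne_zero]

lemma Msym_det (ξ : ℝ) : (Msym ξ).det = 1 / 12 := by
  simp only [Msym, Matrix.det_fin_two_of]
  push_cast
  linear_combination (Complex.sin ξ ^ 2 / 36) * Complex.I_sq
    - (1 / 36) * Complex.sin_sq_add_cos_sq ξ

lemma det_Rsym_sub_smul_Msym (s ξ μ : ℝ) :
    (Rsym s ξ - (μ : ℂ) • Msym ξ).det
      = ((1 / 12 * (μ * μ) + -Bcoef s ξ * μ + Ccoef s ξ : ℝ) : ℂ) := by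
  rw [Matrix.det_fin_two]
  simp only [Rsym, Msym, Bcoef, Ccoef, Matrix.sub_apply, Matrix.smul_apply, Matrix.of_apply,
    Matrix.cons_val_zero, Matrix.cons_val_one, smul_eq_mul]
  push_cast
  linear_combination ((μ : ℂ) ^ 2 * Complex.sin ξ ^ 2 / 36) * Complex.I_sq
    - ((μ : ℂ) ^ 2 / 36) * Complex.sin_sq_add_cos_sq ξ

lemma isEigOf_Ssym_iff (s ξ μ : ℝ) :
    IsEigOf (Ssym s ξ) μ ↔ 1 / 12 * (μ * μ) + -Bcoef s ξ * μ + Ccoef s ξ = 0 := by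
  rw [Ssym, isEigOf_inv_mul_iff (by simp [Msym_det]), det_Rsym_sub_smul_Msym,
    Complex.ofReal_eq_zero]

noncomputable def smallerRoot (a b c : ℝ) : ℝ := (-b - √(discrim a b c)) / (2 * a)

lemma eq_smallerRoot_of_isLeast {a b c x : ℝ} (ha : 0 < a)
    (hx : IsLeast {y | a * (y * y) + b * y + c = 0} x) : x = smallerRoot a b c := by
  have hD : discrim a b c = √(discrim a b c) * √(discrim a b c) := by
    rw [Real.mul_self_sqrt (discrim_eq_sq_of_quadratic_eq_zero hx.1 ▸ sq_nonneg _)]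
  have roots := quadratic_eq_zero_iff ha.ne' hD
  have hle : x ≤ smallerRoot a b c := hx.2 ((roots _).2 (Or.inr rfl))
  rcases (roots x).1 hx.1 with h | h
  · have : smallerRoot a b c ≤ x := by
      rw [h, smallerRoot]
      gcongr
      linarith [Real.sqrt_nonneg (discrim a b c)]
    linarith
  · exact h

lemma smallerRoot_eq_div {a b c : ℝ} (ha : a ≠ 0) (hD : 0 ≤ discrim a b c)
    (hb : -b + √(discrim a b c) ≠ 0) : smallerRoot a b c = 2 * c / (-b + √(discrim a b c)) := by
  rw [smallerRoot, div_eq_div_iff (mul_ne_zero two_ne_zero ha) hb]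
  have hsq : √(discrim a b c) ^ 2 = b ^ 2 - 4 * a * c := Real.sq_sqrt hD
  linear_combination -hsq

lemma tendsto_smallerRoot_atTop {a p q α β : ℝ} (ha : 0 < a) (hp : 0 < p) :
    Tendsto (fun s => smallerRoot a (-(p * s + q)) (α * s + β)) atTop (𝓝 (α / p)) := by
  -- `f s⁻¹` is the rationalized root 2C / (B + √D), numerator and denominator divided by s.
  set g : ℝ → ℝ := fun t => (p + q * t) ^ 2 - 4 * a * (α * t + β * t ^ 2)
  set f : ℝ → ℝ := fun t => 2 * (α + β * t) / (p + q * t + √(g t))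
  have hg : Tendsto (fun s => g s⁻¹) atTop (𝓝 (p ^ 2)) := by
    have hg0 : Tendsto g (𝓝 0) (𝓝 (p ^ 2)) := by
      simpa [g] using (by fun_prop : Continuous g).tendsto 0
    exact hg0.comp tendsto_inv_atTop_zero
  have hf : Tendsto (fun s => f s⁻¹) atTop (𝓝 (α / p)) := by
    have hf0 : ContinuousAt f 0 := by
      refine ContinuousAt.div (by fun_prop) (by fun_prop) ?_
      simp [g, Real.sqrt_sq hp.le, hp.ne']
    have hf_zero : f 0 = α / p := by
      simp only [f, g, mul_zero, add_zero, zero_pow two_ne_zero, sub_zero, Real.sqrt_sq hp.le]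
      field_simp
      ring
    exact hf_zero ▸ hf0.tendsto.comp tendsto_inv_atTop_zero
  have hB : ∀ᶠ s in atTop, 0 < p * s + q :=
    tendsto_atTop_add_const_right _ q (tendsto_id.const_mul_atTop hp) |>.eventually_gt_atTop 0
  refine hf.congr' ?_
  filter_upwards [eventually_gt_atTop 0, hg.eventually (lt_mem_nhds (pow_pos hp 2)), hB]
    with s hs hgs hBs
  have hdiscrim : discrim a (-(p * s + q)) (α * s + β) = s ^ 2 * g s⁻¹ := by
    simp only [discrim, g]
    field_simp
  have hsqrt : √(discrim a (-(p * s + q)) (α * s + β)) = s * √(g s⁻¹) := by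
    rw [hdiscrim, Real.sqrt_mul (by positivity), Real.sqrt_sq hs.le]
  have hden : -(-(p * s + q)) + √(discrim a (-(p * s + q)) (α * s + β)) ≠ 0 := by
    rw [hsqrt, neg_neg]
    exact (add_pos_of_pos_of_nonneg hBs (by positivity)).ne'
  rw [smallerRoot_eq_div ha.ne' (hdiscrim ▸ mul_nonneg (sq_nonneg s) hgs.le) hden, hsqrt]
  simp only [f]
  field_simp

theorem Ssym_physical_eigenvalue_tendsto_FEM_general (ξ : ℝ)
    (Λph : ℝ → ℝ)
    (hph : ∀ s : ℝ, 1 < s → IsEigOf (Ssym s ξ) ((Λph s : ℝ) : ℂ) ∧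
      ∀ μ : ℝ, IsEigOf (Ssym s ξ) (μ : ℂ) → Λph s ≤ μ) :
    Filter.Tendsto Λph Filter.atTop
      (nhds (6 * (1 - Real.cos ξ) / (2 + Real.cos ξ))) := by
  have hΛ : ∀ s, 1 < s → Λph s = smallerRoot (1 / 12) (-Bcoef s ξ) (Ccoef s ξ) := fun s hs =>
    eq_smallerRoot_of_isLeast (by norm_num) ⟨(isEigOf_Ssym_iff s ξ _).1 (hph s hs).1,
      fun μ hμ => (hph s hs).2 μ ((isEigOf_Ssym_iff s ξ μ).2 hμ)⟩
  have hcos : 0 < 2 + Real.cos ξ := by linarith [Real.neg_one_le_cos ξ]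
  have hlim := tendsto_smallerRoot_atTop (a := 1 / 12) (p := (2 + Real.cos ξ) / 3)
    (q := Real.sin (ξ / 2) ^ 2 * (2 - Real.cos ξ) / 3 - Real.cos (ξ / 2) ^ 2 * (2 + Real.cos ξ) / 3)
    (α := 4 * Real.sin (ξ / 2) ^ 2) (β := -(4 * Real.sin (ξ / 2) ^ 2 * Real.cos (ξ / 2) ^ 2))
    (by norm_num) (by positivity)
  have hvalue : 4 * Real.sin (ξ / 2) ^ 2 / ((2 + Real.cos ξ) / 3)
      = 6 * (1 - Real.cos ξ) / (2 + Real.cos ξ) := by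
    rw [Real.sin_sq_eq_half_sub, mul_div_cancel₀ _ two_ne_zero]
    field_simp
    ring
  refine (hvalue ▸ hlim).congr' ?_
  filter_upwards [eventually_gt_atTop 1] with s hs
  rw [hΛ s hs, Bcoef, Ccoef]
  ring_nf

theorem Ssym_physical_eigenvalue_tendsto_FEM (ξ : ℝ) (hξ : ξ ∈ Set.Ioc 0 Real.pi)
    (Λph : ℝ → ℝ)
    (hph : ∀ s : ℝ, 1 < s → IsEigOf (Ssym s ξ) ((Λph s : ℝ) : ℂ) ∧
      ∀ μ : ℝ, IsEigOf (Ssym s ξ) (μ : ℂ) → Λph s ≤ μ) :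
    Filter.Tendsto Λph Filter.atTop
      (nhds (6 * (1 - Real.cos ξ) / (2 + Real.cos ξ))) :=
  Ssym_physical_eigenvalue_tendsto_FEM_general ξ Λph hph
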